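/- Marginal inference in a decomposable and complete SPN with normalized weights is exact and linear time: replacing every leaf over a marginalized variable by the constant 1 (i.e., summing its distribution to 1) yields a circuit whose root value equals the marginal ∑_{x_M} S(x_E, x_M) over the marginalized variables M, for any assignment x_E to the remaining variables E. -/

import Mathlib

open Finset

inductive SPN (n : ℕ) (D : Fin n → Type) where
  | leaf (i : Fin n) (f : D i → ℝ)
  | prod (l r : SPN n D)
  | sum (w₁ w₂ : ℝ) (l r : SPN n D)

namespace SPN

variable {n : ℕ} {D : Fin n → Type}

def scope : SPN n D → Finset (Fin n)
  | leaf i _ => {i}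
  | prod l r => scope l ∪ scope r
  | sum _ _ l r => scope l ∪ scope r

def eval : SPN n D → ((i : Fin n) → D i) → ℝ
  | leaf i f, x => f (x i)
  | prod l r, x => eval l x * eval r x
  | sum w₁ w₂ l r, x => w₁ * eval l x + w₂ * eval r x

def valid [∀ i, Fintype (D i)] : SPN n D → Prop
  | leaf _ f => (∀ x, 0 ≤ f x) ∧ ∑ x, f x = 1
  | prod l r => valid l ∧ valid r ∧ Disjoint (scope l) (scope r)
  | sum w₁ w₂ l r => valid l ∧ valid r ∧ 0 ≤ w₁ ∧ 0 ≤ w₂ ∧ w₁ + w₂ = 1 ∧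
      scope l = scope r

/-- Leaf-marginalization: every leaf over a variable in `M` is replaced by the
constant function `1` (its distribution summed out). -/
def marg (M : Finset (Fin n)) : SPN n D → SPN n D
  | leaf i f => if i ∈ M then leaf i (fun _ => 1) else leaf i f
  | prod l r => prod (marg M l) (marg M r)
  | sum w₁ w₂ l r => sum w₁ w₂ (marg M l) (marg M r)

end SPN

/-! Induct on the circuit, summing out only the marginalized variables in the scope of each node.
At a leaf over a marginalized variable, summing out its normalized distribution gives the constant
`1`. At a sum node completeness gives both children the same variables to sum out, so summing out
commutes with the weighted sum. At a product node decomposability splits the variables into the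
disjoint sets seen by the two factors, so the sum of the product is the product of the sums. -/

open Function

section updateFinset

variable {ι : Type*} [DecidableEq ι] {π : ι → Type*}

theorem DependsOn.apply_updateFinset {β : Type*} {f : (∀ i, π i) → β} {s : Finset ι}
    (hf : DependsOn f (↑s)ᶜ) (x : ∀ i, π i) (y : ∀ i : s, π i) :
    f (Function.updateFinset x s y) = f x :=
  hf fun i hi => by simp_all [Function.updateFinset]

theorem sum_updateFinset_singleton [∀ i, Fintype (π i)] {M : Type*} [AddCommMonoid M]
    (f : (∀ i, π i) → M) (x : ∀ i, π i) (i : ι) :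
    ∑ y : (∀ j : ↥({i} : Finset ι), π j), f (updateFinset x {i} y) =
      ∑ d : π i, f (update x i d) := by
  simp only [updateFinset_singleton]
  exact Fintype.sum_equiv (Equiv.piUnique fun j : ↥({i} : Finset ι) => π j) _ _ fun _ => rfl

theorem sum_updateFinset_union_mul [∀ i, Fintype (π i)] {R : Type*} [CommSemiring R]
    {A B : Finset ι} (hAB : Disjoint A B) {f g : (∀ i, π i) → R}
    (hf : DependsOn f (↑B)ᶜ) (hg : DependsOn g (↑A)ᶜ) (x : ∀ i, π i) :
    ∑ y : (∀ i : ↥(A ∪ B), π i),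
        f (updateFinset x (A ∪ B) y) * g (updateFinset x (A ∪ B) y) =
      (∑ a : (∀ i : A, π i), f (updateFinset x A a)) *
        ∑ b : (∀ i : B, π i), g (updateFinset x B b) := by
  rw [← (Equiv.piFinsetUnion π hAB).sum_comp, Fintype.sum_prod_type, sum_mul_sum]
  refine sum_congr rfl fun a _ => sum_congr rfl fun b _ => ?_
  rw [← updateFinset_updateFinset hAB, hf.apply_updateFinset]
  congr 1
  exact hg fun i hi => by simp_all [updateFinset]

end updateFinset

namespace SPN

variable {n : ℕ} {D : Fin n → Type}

theorem dependsOn_eval (S : SPN n D) : DependsOn S.eval S.scope := by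
  induction S with
  | leaf i f => exact fun x y h => congrArg f (h i (mem_singleton_self i))
  | prod l r ihl ihr =>
    exact fun x y h => congrArg₂ (· * ·) (ihl fun i hi => h i (mem_union_left _ hi))
      (ihr fun i hi => h i (mem_union_right _ hi))
  | sum w₁ w₂ l r ihl ihr =>
    exact fun x y h => congrArg₂ (w₁ * · + w₂ * ·) (ihl fun i hi => h i (mem_union_left _ hi))
      (ihr fun i hi => h i (mem_union_right _ hi))

theorem eval_marg [∀ i, Fintype (D i)] (M : Finset (Fin n)) {S : SPN n D} (hS : S.valid)
    (x : (i : Fin n) → D i) :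
    (S.marg M).eval x =
      ∑ y : (∀ i : ↥(M ∩ S.scope), D i), S.eval (updateFinset x (M ∩ S.scope) y) := by
  induction S with
  | leaf i f =>
    by_cases hi : i ∈ M
    · have hMi : M ∩ {i} = {i} := inter_singleton_of_mem hi
      rw [show (leaf i f).scope = {i} from rfl, hMi]
      simp only [marg, if_pos hi, eval]
      rw [sum_updateFinset_singleton (fun x => f (x i)), ← hS.2]
      simp only [update_self]
    · have hMi : M ∩ {i} = ∅ := inter_singleton_of_notMem hi
      rw [show (leaf i f).scope = {i} from rfl, hMi]
      simp only [marg, if_neg hi, eval, Fintype.sum_unique, updateFinset_empty]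
  | prod l r ihl ihr =>
    obtain ⟨hl, hr, hd⟩ := hS
    have hl_indep : DependsOn l.eval (↑(M ∩ r.scope))ᶜ :=
      l.dependsOn_eval.mono <| Set.subset_compl_iff_disjoint_right.mpr <|
        disjoint_coe.mpr <| hd.mono_right inter_subset_right
    have hr_indep : DependsOn r.eval (↑(M ∩ l.scope))ᶜ :=
      r.dependsOn_eval.mono <| Set.subset_compl_iff_disjoint_right.mpr <|
        disjoint_coe.mpr <| hd.symm.mono_right inter_subset_right
    rw [show (prod l r).scope = l.scope ∪ r.scope from rfl, inter_union_distrib_left]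
    simp only [marg, eval]
    rw [ihl hl, ihr hr, sum_updateFinset_union_mul
      (hd.mono inter_subset_right inter_subset_right) hl_indep hr_indep]
  | sum w₁ w₂ l r ihl ihr =>
    obtain ⟨hl, hr, -, -, -, hlr⟩ := hS
    rw [show (sum w₁ w₂ l r).scope = l.scope ∪ r.scope from rfl, ← hlr, union_self]
    simp only [marg, eval]
    rw [ihl hl, ihr hr, ← hlr, mul_sum, mul_sum, ← sum_add_distrib]

end SPN

/-- Exact linear-time marginal inference in a complete and
decomposable SPN: for a circuit `S` whose scope is all of `V = E ∪ M`,
replacing every leaf over a marginalized variable (in `M`) by the constant `1`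
yields a circuit whose value at any assignment `x` equals the marginal
`∑_{x_M} S(x_E, x_M)` obtained by summing the original circuit over all
completions of `x` on `M`. -/
theorem spn_marginalization
    (n : ℕ) (D : Fin n → Type) [∀ i, Fintype (D i)]
    (S : SPN n D) (hS : S.valid) (hscope : S.scope = Finset.univ)
    (M : Finset (Fin n)) (x : (i : Fin n) → D i) :
    (S.marg M).eval x =
      ∑ y : (i : {i // i ∈ M}) → D i,
        S.eval (fun i => if h : i ∈ M then y ⟨i, h⟩ else x i) := by
  have h := SPN.eval_marg M hS x
  rwa [hscope, inter_univ] at h
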